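/- arXiv:math/0605384 — 3 statements merged into one kernel-verified Lean document; each statement's English description precedes it below -/
import Mathlib

section
/- For every k ∈ {1,…,r} and every j ∈ {1,…,r}, the subspace K_k = {(0,…,0,u,0,…,0)ᵀ ∈ V^r : u ∈ ker(M_k − 1)} (with u placed in the k-th component) is invariant under the convolution operator N_j, i.e. N_j(K_k) ⊆ K_k. -/
open Module LinearMap Submodule

/-- The coefficient endomorphism appearing in the `k`-th row of the convolution
operator `N_k`. -/
noncomputable def convCoeff {V : Type*} [AddCommGroup V] [Module ℂ V] {r : ℕ}
    (M : Fin r → Module.End ℂ V) (lam : ℂ) (k i : Fin r) : Module.End ℂ V :=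
  if i < k then M i - 1 else if i = k then lam • M k else lam • (M i - 1)

/-- The convolution operator `N_k` on `V^r`: it leaves every component `v_j` with
`j ≠ k` unchanged and replaces the `k`-th component by
`(M_1 − 1)v_1 + ⋯ + (M_{k−1} − 1)v_{k−1} + λ M_k v_k + λ(M_{k+1} − 1)v_{k+1} + ⋯ + λ(M_r − 1)v_r`. -/
noncomputable def convOp {V : Type*} [AddCommGroup V] [Module ℂ V] {r : ℕ}
    (M : Fin r → Module.End ℂ V) (lam : ℂ) (k : Fin r) :
    Module.End ℂ (Fin r → V) :=
  LinearMap.pi fun j =>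
    if j = k then ∑ i : Fin r, convCoeff M lam k i ∘ₗ LinearMap.proj i
    else LinearMap.proj j

/-- The subspace `K_k = {(0,…,0,u,0,…,0)ᵀ : u ∈ ker(M_k − 1)}` (`u` in the `k`-th slot). -/
noncomputable def Ksub {V : Type*} [AddCommGroup V] [Module ℂ V] {r : ℕ}
    (M : Fin r → Module.End ℂ V) (k : Fin r) : Submodule ℂ (Fin r → V) :=
  Submodule.pi Set.univ fun j => if j = k then LinearMap.ker (M k - 1) else ⊥

/-- The subspace `L = ⋂_k ker(N_k − 1)`. -/
noncomputable def Lsub {V : Type*} [AddCommGroup V] [Module ℂ V] {r : ℕ}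
    (M : Fin r → Module.End ℂ V) (lam : ℂ) : Submodule ℂ (Fin r → V) :=
  ⨅ k : Fin r, LinearMap.ker (convOp M lam k - 1)

/-- The subspace `K + L` with `K = K_1 ⊕ ⋯ ⊕ K_r`. -/
noncomputable def KLsub {V : Type*} [AddCommGroup V] [Module ℂ V] {r : ℕ}
    (M : Fin r → Module.End ℂ V) (lam : ℂ) : Submodule ℂ (Fin r → V) :=
  (⨆ k : Fin r, Ksub M k) ⊔ Lsub M lam

/-- The middle convolution operator `Ñ_k` induced by `N_k` on `V^r/(K + L)`. -/
noncomputable def mcOp {V : Type*} [AddCommGroup V] [Module ℂ V] {r : ℕ}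
    (M : Fin r → Module.End ℂ V) (lam : ℂ)
    (h : ∀ k : Fin r, KLsub M lam ≤ (KLsub M lam).comap (convOp M lam k))
    (k : Fin r) : Module.End ℂ ((Fin r → V) ⧸ KLsub M lam) :=
  Submodule.mapQ _ _ (convOp M lam k) (h k)

/-- Condition (*): there is no nonzero `v ∈ V` fixed by all `M_j`, `j ≠ i`, which is an
eigenvector of `M_i`. -/
def CondStar {V : Type*} [AddCommGroup V] [Module ℂ V] {r : ℕ}
    (M : Fin r → Module.End ℂ V) : Prop :=
  ∀ i : Fin r,
    ¬ ∃ v : V, v ≠ 0 ∧ (∀ j : Fin r, j ≠ i → M j v = v) ∧ ∃ a : ℂ, M i v = a • v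

/-- Condition (**): there is no codimension-one subspace `W ⊆ V` invariant under all `M_j`
with `(M_j − 1)(V) ⊆ W` for all `j ≠ i`. -/
def CondStarStar {V : Type*} [AddCommGroup V] [Module ℂ V] {r : ℕ}
    (M : Fin r → Module.End ℂ V) : Prop :=
  ∀ i : Fin r,
    ¬ ∃ W : Submodule ℂ V, Module.finrank ℂ (V ⧸ W) = 1 ∧
      (∀ j : Fin r, W.map (M j) ≤ W) ∧
      ∀ j : Fin r, j ≠ i → LinearMap.range (M j - 1) ≤ W

/-- each `K_k` is invariant under every convolution operator `N_j`. -/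
theorem Ksub_invariant_under_convOp
    {V : Type*} [AddCommGroup V] [Module ℂ V] [FiniteDimensional ℂ V]
    {r : ℕ} (hr : 1 ≤ r)
    (M : Fin r → Module.End ℂ V) (hM : ∀ i : Fin r, Function.Bijective (M i))
    (lam : ℂ) (hlam : lam ≠ 0) (k j : Fin r) :
    (Ksub M k).map (convOp M lam j) ≤ Ksub M k := by
  rintro _ ⟨x, hx, rfl⟩
  rw [Ksub, SetLike.mem_coe, Submodule.mem_pi] at hx
  have hx0 : ∀ l, l ≠ k → x l = 0 := by
    intro l hl
    have h := hx l (Set.mem_univ l)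
    rw [if_neg hl] at h
    simpa using h
  have hxk : (M k - 1) (x k) = 0 := by
    have h := hx k (Set.mem_univ k)
    rw [if_pos rfl] at h
    exact LinearMap.mem_ker.mp h
  rw [Ksub, Submodule.mem_pi]
  intro i _
  simp only [convOp, LinearMap.pi_apply]
  by_cases hij : i = j
  · subst hij
    rw [if_pos rfl]
    have hsum : (∑ l : Fin r, convCoeff M lam i l ∘ₗ LinearMap.proj l) x
        = convCoeff M lam i k (x k) := by
      rw [LinearMap.sum_apply, Finset.sum_eq_single k]
      · simp
      · intro l _ hl
        simp [hx0 l hl]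
      · simp
    rw [hsum]
    by_cases hik : i = k
    · subst hik
      rw [if_pos rfl]
      simp only [convCoeff, lt_irrefl, if_neg, if_pos rfl, if_false, LinearMap.mem_ker]
      have hMi : M i (x i) = x i := by
        simpa [sub_eq_zero] using hxk
      simp [hMi, sub_eq_zero]
    · rw [if_neg hik, Submodule.mem_bot]
      unfold convCoeff
      by_cases hlt : k < i
      · rw [if_pos hlt]
        exact hxk
      · rw [if_neg hlt, if_neg (fun h => hik h.symm)]
        simp [hxk]
  · rw [if_neg hij]
    simpa using hx i (Set.mem_univ i)
end

section
/- The subspace L := ⋂_{k=1}^r ker(N_k − 1) of V^r equals the kernel of N_1 N_2 ⋯ N_r − 1, where the N_k are the convolution operators. In particular every vector of L is fixed by each N_k, and the subspace K + L (with K := K_1 ⊕ ⋯ ⊕ K_r) is invariant under every N_k. -/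
open Module LinearMap Submodule

section Aux
variable {V : Type*} [AddCommGroup V] [Module ℂ V] {r : ℕ}
  (M : Fin r → Module.End ℂ V) (lam : ℂ)

lemma convOp_apply (k : Fin r) (x : Fin r → V) (j : Fin r) :
    convOp M lam k x j =
      if j = k then ∑ i : Fin r, convCoeff M lam k i (x i) else x j := by
  simp only [convOp, LinearMap.pi_apply]
  split <;> simp

lemma convOp_apply_ne (k : Fin r) (x : Fin r → V) {j : Fin r} (h : j ≠ k) :
    convOp M lam k x j = x j := by
  rw [convOp_apply]; simp [h]

lemma prod_fix (l : List (Fin r)) (x : Fin r → V) {j : Fin r} (hj : j ∉ l) :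
    (l.map (convOp M lam)).prod x j = x j := by
  induction l with
  | nil => simp
  | cons a t ih =>
    simp only [List.mem_cons, not_or] at hj
    simp only [List.map_cons, List.prod_cons, Module.End.mul_apply]
    rw [convOp_apply_ne M lam a _ hj.1, ih hj.2]

lemma prod_fixed_of_nodup (l : List (Fin r)) (hl : l.Nodup) (x : Fin r → V)
    (hx : (l.map (convOp M lam)).prod x = x) :
    ∀ k ∈ l, convOp M lam k x = x := by
  induction l with
  | nil => simp
  | cons a t ih =>
    simp only [List.map_cons, List.prod_cons, Module.End.mul_apply] at hx
    have hnd := List.nodup_cons.mp hl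
    set y := (t.map (convOp M lam)).prod x with hy
    have hyx : y = x := by
      funext j
      by_cases hja : j = a
      · subst hja; exact prod_fix M lam t x hnd.1
      · have h1 := congrFun hx j
        rw [← h1, convOp_apply_ne M lam a y hja]
    intro k hk
    rcases List.mem_cons.mp hk with h | h
    · subst h; rw [← hyx] at hx ⊢; exact hx
    · exact ih hnd.2 hyx k h

lemma prod_fix_of_all (l : List (Fin r)) (x : Fin r → V)
    (hx : ∀ k, convOp M lam k x = x) : (l.map (convOp M lam)).prod x = x := by
  induction l with
  | nil => simp
  | cons a t ih =>
    simp only [List.map_cons, List.prod_cons, Module.End.mul_apply, ih, hx]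

lemma mem_Lsub {x : Fin r → V} :
    x ∈ Lsub M lam ↔ ∀ k, convOp M lam k x = x := by
  simp [Lsub, Submodule.mem_iInf, LinearMap.mem_ker, LinearMap.sub_apply,
    Module.End.one_apply, sub_eq_zero]

end Aux

/-- `L = ⋂_k ker(N_k − 1)` equals `ker(N_1 ⋯ N_r − 1)`; in particular every
vector of `L` is fixed by each `N_k`, and `K + L` is invariant under every `N_k`. -/
theorem Lsub_eq_ker_prod_and_KL_invariant
    {V : Type*} [AddCommGroup V] [Module ℂ V] [FiniteDimensional ℂ V]
    {r : ℕ} (hr : 1 ≤ r)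
    (M : Fin r → Module.End ℂ V) (hM : ∀ i : Fin r, Function.Bijective (M i))
    (lam : ℂ) (hlam : lam ≠ 0) :
    Lsub M lam = LinearMap.ker ((List.ofFn fun i : Fin r => convOp M lam i).prod - 1) ∧
    (∀ k : Fin r, ∀ x ∈ Lsub M lam, convOp M lam k x = x) ∧
    (∀ k : Fin r, (KLsub M lam).map (convOp M lam k) ≤ KLsub M lam) := by
  have hofn : (List.ofFn fun i : Fin r => convOp M lam i)
      = (List.finRange r).map (convOp M lam) := by
    rw [List.ofFn_eq_map]
  refine ⟨?_, ?_, ?_⟩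
  · ext x
    rw [mem_Lsub, LinearMap.mem_ker, hofn, LinearMap.sub_apply,
      Module.End.one_apply, sub_eq_zero]
    constructor
    · intro h
      exact prod_fix_of_all M lam _ x h
    · intro h k
      exact prod_fixed_of_nodup M lam _ (List.nodup_finRange r) x h k
        (List.mem_finRange k)
  · intro k x hx
    exact (mem_Lsub M lam).mp hx k
  · intro k
    rw [KLsub, Submodule.map_sup]
    apply sup_le
    · rw [Submodule.map_iSup]
      apply iSup_le
      intro j
      rintro _ ⟨e, he, rfl⟩
      simp only [SetLike.mem_coe, Ksub, Submodule.mem_pi] at he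
      have hzero : ∀ i, i ≠ j → e i = 0 := by
        intro i hij
        have := he i (Set.mem_univ i)
        rw [if_neg hij] at this
        simpa using this
      have hkerj : (M j - 1) (e j) = 0 := by
        have := he j (Set.mem_univ j)
        rw [if_pos rfl] at this
        exact this
      have hsum : ∑ i : Fin r, convCoeff M lam k i (e i)
          = convCoeff M lam k j (e j) := by
        refine Finset.sum_eq_single j (fun i _ hij => ?_) (by simp)
        rw [hzero i hij, map_zero]
      by_cases hjk : j = k
      · subst hjk
        have hstep : convOp M lam j e = lam • e := by
          funext i
          by_cases hik : i = j
          · subst hik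
            rw [convOp_apply, if_pos rfl, hsum]
            have hMk : M i (e i) = e i := by
              have h2 := hkerj
              rw [LinearMap.sub_apply, Module.End.one_apply, sub_eq_zero] at h2
              exact h2
            simp [convCoeff, hMk]
          · rw [convOp_apply, if_neg hik]
            simp [Pi.smul_apply, hzero i hik]
        rw [hstep]
        apply Submodule.mem_sup_left
        exact Submodule.mem_iSup_of_mem j (Submodule.smul_mem _ lam
          (by rw [Ksub, Submodule.mem_pi]; exact he))
      · have hstep : convOp M lam k e = e := by
          funext i
          by_cases hik : i = k
          · subst hik
            rw [convOp_apply, if_pos rfl, hsum, hzero i (Ne.symm hjk)]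
            rw [convCoeff]
            by_cases h1 : j < i
            · rw [if_pos h1]; exact hkerj
            · rw [if_neg h1, if_neg hjk, LinearMap.smul_apply, hkerj, smul_zero]
          · rw [convOp_apply, if_neg hik]
        rw [hstep]
        apply Submodule.mem_sup_left
        exact Submodule.mem_iSup_of_mem j (by rw [Ksub, Submodule.mem_pi]; exact he)
    · rintro _ ⟨x, hx, rfl⟩
      rw [(mem_Lsub M lam).mp hx k]
      exact Submodule.mem_sup_right hx
end

section
/- Let λ_1, λ_2 ∈ ℂ be nonzero with λ := λ_1λ_2, and suppose M satisfies conditions (*) and (**). Then MC_{λ_2}(MC_{λ_1}(M)) is isomorphic to MC_λ(M) as representations of the free group F_r: there exists a ℂ-linear isomorphism T from the underlying space of MC_{λ_2}(MC_{λ_1}(M)) to the underlying space of MC_λ(M) such that T conjugates the k-th component of MC_{λ_2}(MC_{λ_1}(M)) to the k-th component of MC_λ(M) for every k = 1,…,r. -/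
/-!
Write `N_k = 1 + e_k ρ_k` with `ρ_k : V^r → V` (`convRow`). The map
`Ψ(b) = (ρ_1(b_1), …, ρ_r(b_r))` from `(V^r)^r` to `V^r` intertwines `C_{λ₂}(C_{λ₁}(M))`
with `C_{λ₁λ₂}(M)`, and it is onto by (**). By (*), a vector `v` lies in `K + L` exactly when
`M_k` fixes `ρ_k(v)` for every `k`; with this description of `K + L` one checks that `Ψ`,
followed by the quotient map to `MC_{λ₁λ₂}(M)`, has the same kernel as the quotient map from
`(V^r)^r` onto the space of `MC_{λ₂}(MC_{λ₁}(M))`. Hence `Ψ` induces the isomorphism.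
-/

open Module LinearMap Submodule

section ConvRow

variable {V : Type*} [AddCommGroup V] [Module ℂ V] {r : ℕ}

noncomputable def convRow (M : Fin r → Module.End ℂ V) (lam : ℂ) (k : Fin r) :
    (Fin r → V) →ₗ[ℂ] V :=
  (∑ i : Fin r, convCoeff M lam k i ∘ₗ LinearMap.proj i) - LinearMap.proj k

theorem convOp_apply_s4 (M : Fin r → Module.End ℂ V) (lam : ℂ) (k : Fin r) (v : Fin r → V) :
    convOp M lam k v = v + Pi.single k (convRow M lam k v) := by
  funext j
  rcases eq_or_ne j k with rfl | hj
  · simp [convOp, convRow, LinearMap.sum_apply]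
  · simp [convOp, hj]

theorem convCoeff_apply (M : Fin r → Module.End ℂ V) (lam : ℂ) (k i : Fin r) (u : V) :
    convCoeff M lam k i u =
      (if i < k then 1 else lam) • (M i u - u) + if i = k then lam • u else 0 := by
  rcases lt_trichotomy i k with h | rfl | h
  · simp [convCoeff, h, h.ne]
  · simp [convCoeff, smul_sub]
  · simp [convCoeff, h.ne', not_lt.2 h.le]

theorem convRow_apply (M : Fin r → Module.End ℂ V) (lam : ℂ) (k : Fin r) (v : Fin r → V) :
    convRow M lam k v =
      ∑ j, (if j < k then 1 else lam) • (M j (v j) - v j) + (lam - 1) • v k := by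
  simp only [convRow, LinearMap.sub_apply, LinearMap.sum_apply, LinearMap.coe_comp,
    LinearMap.coe_proj, Function.comp_apply, Function.eval, convCoeff_apply, ite_smul, one_smul,
    Finset.sum_add_distrib, Finset.sum_ite_eq', Finset.mem_univ, if_true, sub_smul]
  abel

theorem convRow_single (M : Fin r → Module.End ℂ V) (lam : ℂ) (k j : Fin r) (u : V) :
    convRow M lam k (Pi.single j u) =
      (if j < k then 1 else lam) • (M j u - u) +
        (lam - 1) • (Pi.single j u : Fin r → V) k := by
  rw [convRow_apply, Finset.sum_eq_single j (fun i _ hi => by simp [hi]) (by simp)]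
  simp

theorem convRow_of_fixed (M : Fin r → Module.End ℂ V) (lam : ℂ) (k : Fin r) {v : Fin r → V}
    (hv : ∀ j, M j (v j) = v j) : convRow M lam k v = (lam - 1) • v k := by
  simp [convRow_apply, hv]

theorem convRow_one (M : Fin r → Module.End ℂ V) (k : Fin r) (v : Fin r → V) :
    convRow M 1 k v = ∑ j, (M j (v j) - v j) := by
  simp [convRow_apply]

theorem Ksub_eq_map_single (M : Fin r → Module.End ℂ V) (k : Fin r) :
    Ksub M k = (LinearMap.ker (M k - 1)).map (LinearMap.single ℂ (fun _ => V) k) := by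
  ext v
  simp only [Ksub, Submodule.mem_pi, Set.mem_univ, true_implies, Submodule.mem_map,
    LinearMap.coe_single]
  constructor
  · intro hv
    refine ⟨v k, by simpa using hv k, funext fun j => ?_⟩
    rcases eq_or_ne j k with rfl | hj
    · simp
    · simpa [hj, eq_comm] using hv j
  · rintro ⟨u, hu, rfl⟩ j
    rcases eq_or_ne j k with rfl | hj <;> simp [*]

theorem mem_iSup_Ksub_iff (M : Fin r → Module.End ℂ V) (v : Fin r → V) :
    v ∈ ⨆ k, Ksub M k ↔ ∀ j, M j (v j) = v j := by
  simp [Ksub_eq_map_single, Submodule.iSup_map_single, sub_eq_zero]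

theorem mem_Lsub_iff (M : Fin r → Module.End ℂ V) (lam : ℂ) (v : Fin r → V) :
    v ∈ Lsub M lam ↔ ∀ k, convRow M lam k v = 0 := by
  simp [Lsub, convOp_apply_s4]

theorem mem_KLsub_iff (M : Fin r → Module.End ℂ V) (lam : ℂ) (v : Fin r → V) :
    v ∈ KLsub M lam ↔ ∃ κ ℓ : Fin r → V, (∀ j, M j (κ j) = κ j) ∧
      (∀ k, convRow M lam k ℓ = 0) ∧ κ + ℓ = v := by
  simp [KLsub, Submodule.mem_sup, mem_iSup_Ksub_iff, mem_Lsub_iff]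

end ConvRow

section Conditions

variable {V : Type*} [AddCommGroup V] [Module ℂ V] {r : ℕ} {M : Fin r → Module.End ℂ V}
  {lam : ℂ}

theorem mem_KLsub_iff_forall_convRow_fixed (hstar : CondStar M) {v : Fin r → V} :
    v ∈ KLsub M lam ↔ ∀ k, M k (convRow M lam k v) = convRow M lam k v := by
  constructor
  · intro hv k
    obtain ⟨κ, ℓ, hκ, hℓ, rfl⟩ := (mem_KLsub_iff M lam v).1 hv
    rw [map_add, hℓ k, add_zero, convRow_of_fixed M lam k hκ, map_smul, hκ k]
  · intro hv
    rcases eq_or_ne lam 1 with rfl | hlam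
    · refine Submodule.mem_sup_right ((mem_Lsub_iff M 1 v).2 fun k => ?_)
      -- for `lam = 1` all rows coincide, so each one is fixed by every `M j`
      have hfix : ∀ j, M j (convRow M 1 k v) = convRow M 1 k v := fun j => by
        simpa only [convRow_one] using hv j
      by_contra hne
      exact hstar k ⟨_, hne, fun j _ => hfix j, 1, by rw [hfix k, one_smul]⟩
    · set κ : Fin r → V := fun k => (lam - 1)⁻¹ • convRow M lam k v
      have hκ : ∀ j, M j (κ j) = κ j := fun j => by simp only [κ, map_smul, hv j]
      refine (mem_KLsub_iff M lam v).2 ⟨κ, v - κ, hκ, fun k => ?_, add_sub_cancel _ _⟩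
      rw [map_sub, convRow_of_fixed M lam k hκ, smul_smul,
        mul_inv_cancel₀ (sub_ne_zero.2 hlam), one_smul, sub_self]

theorem single_mem_KLsub_iff (hstar : CondStar M) (hlam : lam ≠ 0) {k : Fin r} {u : V} :
    Pi.single k u ∈ KLsub M lam ↔ M k u = u := by
  refine ⟨fun h => ?_, fun h => Submodule.mem_sup_left ((mem_iSup_Ksub_iff M _).2 fun j => ?_)⟩
  · rw [mem_KLsub_iff_forall_convRow_fixed hstar] at h
    obtain ⟨d, hd⟩ : ∃ d, M k u - u = d := ⟨_, rfl⟩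
    have hfix : ∀ j, j ≠ k → M j d = d := by
      intro j hj
      have hj' := h j
      rw [convRow_single, hd, Pi.single_eq_of_ne hj, smul_zero, add_zero, map_smul] at hj'
      exact smul_right_injective V (by split_ifs <;> simp [hlam]) hj'
    have heig : M k d = lam⁻¹ • d := by
      have hk := h k
      rw [convRow_single, hd, Pi.single_eq_same, if_neg (lt_irrefl k), map_add, map_smul,
        map_smul, sub_eq_iff_eq_add'.1 hd] at hk
      rw [eq_inv_smul_iff₀ hlam]
      linear_combination (norm := module) hk
    by_contra hne
    exact hstar k ⟨d, hd ▸ sub_ne_zero.2 hne, hfix, lam⁻¹, heig⟩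
  · rcases eq_or_ne j k with rfl | hj <;> simp [*]

theorem convRow_surjective (hss : CondStarStar M) (hlam : lam ≠ 0) (k : Fin r) :
    Function.Surjective (convRow M lam k) := by
  rw [← LinearMap.range_eq_top]
  by_contra hR
  obtain ⟨f, hf, hRf⟩ :=
    (LinearMap.range (convRow M lam k)).exists_le_ker_of_lt_top (lt_top_iff_ne_top.2 hR)
  have hrow : ∀ j u, f (convRow M lam k (Pi.single j u)) = 0 :=
    fun j u => hRf (LinearMap.mem_range_self _ _)
  have hsub : ∀ j, j ≠ k → ∀ u, f (M j u - u) = 0 := by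
    intro j hj u
    have hju := hrow j u
    rw [convRow_single, Pi.single_eq_of_ne hj.symm, smul_zero, add_zero, map_smul,
      smul_eq_mul] at hju
    exact (mul_eq_zero.1 hju).resolve_left (by split_ifs <;> simp [hlam])
  -- `ker f` contains every `(M j - 1) u`, `j ≠ k`, and every `lam • M k u - u`
  refine hss k ⟨LinearMap.ker f, ?_, fun j => ?_, fun j hj => ?_⟩
  · rw [(f.quotKerEquivOfSurjective (LinearMap.surjective hf)).finrank_eq, Module.finrank_self]
  · rintro _ ⟨u, hu, rfl⟩
    rw [SetLike.mem_coe, LinearMap.mem_ker] at hu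
    rw [LinearMap.mem_ker]
    rcases eq_or_ne j k with rfl | hj
    · simpa [convRow_single, hu, hlam] using hrow j u
    · simpa [hu] using hsub j hj u
  · rintro _ ⟨u, rfl⟩
    exact hsub j hj u

end Conditions

section Composition

variable {V : Type*} [AddCommGroup V] [Module ℂ V] {r : ℕ}

theorem convRow_smul_tail (M : Fin r → Module.End ℂ V) (lam1 lam2 : ℂ) (k : Fin r)
    (v : Fin r → V) :
    convRow M lam1 k (fun j => (if j < k then 1 else lam2) • v j) =
      convRow M (lam1 * lam2) k v + (1 - lam2) • v k := by
  simp only [convRow_apply, map_smul, lt_irrefl, if_false]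
  rw [add_assoc]
  congr 1
  · refine Finset.sum_congr rfl fun j _ => ?_
    split_ifs <;> module
  · module

noncomputable def convRowDiag (M : Fin r → Module.End ℂ V) (lam : ℂ) :
    (Fin r → Fin r → V) →ₗ[ℂ] (Fin r → V) :=
  LinearMap.pi fun i => convRow M lam i ∘ₗ LinearMap.proj i

theorem convRowDiag_apply (M : Fin r → Module.End ℂ V) (lam : ℂ) (b : Fin r → Fin r → V)
    (i : Fin r) : convRowDiag M lam b i = convRow M lam i (b i) :=
  rfl

theorem convRow_convOp (M : Fin r → Module.End ℂ V) (lam1 lam2 : ℂ) (k : Fin r)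
    (b : Fin r → Fin r → V) :
    convRow (convOp M lam1) lam2 k b =
      (fun j => (if j < k then 1 else lam2) • convRowDiag M lam1 b j) + (lam2 - 1) • b k := by
  rw [convRow_apply]
  simp only [convOp_apply_s4, add_sub_cancel_left]
  congr 1
  funext i
  rw [Finset.sum_apply, Finset.sum_eq_single i (fun j _ hj => by simp [hj.symm]) (by simp)]
  simp [convRowDiag_apply]

theorem convRow_convRow_convOp (M : Fin r → Module.End ℂ V) (lam1 lam2 : ℂ) (k : Fin r)
    (b : Fin r → Fin r → V) :
    convRow M lam1 k (convRow (convOp M lam1) lam2 k b) =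
      convRow M (lam1 * lam2) k (convRowDiag M lam1 b) := by
  rw [convRow_convOp, map_add, convRow_smul_tail, map_smul, convRowDiag_apply]
  module

theorem convRowDiag_convOp (M : Fin r → Module.End ℂ V) (lam1 lam2 : ℂ) (k : Fin r)
    (b : Fin r → Fin r → V) :
    convRowDiag M lam1 (convOp (convOp M lam1) lam2 k b) =
      convOp M (lam1 * lam2) k (convRowDiag M lam1 b) := by
  funext i
  rcases eq_or_ne i k with rfl | hi
  · simp [convRowDiag_apply, convOp_apply_s4, convRow_convRow_convOp]
  · simp [convRowDiag_apply, convOp_apply_s4, hi]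

theorem convRowDiag_surjective {M : Fin r → Module.End ℂ V} {lam : ℂ} (hss : CondStarStar M)
    (hlam : lam ≠ 0) : Function.Surjective (convRowDiag M lam) := fun v => by
  choose b hb using fun i => convRow_surjective hss hlam i (v i)
  exact ⟨b, funext hb⟩

theorem exists_convRowDiag_eq_of_mem_Lsub {M : Fin r → Module.End ℂ V} {lam1 lam2 : ℂ}
    (hss : CondStarStar M) (hlam1 : lam1 ≠ 0) {ℓ : Fin r → V}
    (hℓ : ℓ ∈ Lsub M (lam1 * lam2)) :
    ∃ b, convRowDiag M lam1 b = ℓ ∧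
      ∀ k, convRow (convOp M lam1) lam2 k b ∈ KLsub M lam1 := by
  rcases eq_or_ne lam2 1 with rfl | hlam2
  · obtain ⟨b, hb⟩ := convRowDiag_surjective hss hlam1 ℓ
    refine ⟨b, hb, fun k => Submodule.mem_sup_right ?_⟩
    rw [convRow_convOp, hb]
    simpa using hℓ
  · -- chosen so that `convRow_convOp` makes every row `convRow (convOp M lam1) lam2 k b` vanish
    set b : Fin r → Fin r → V :=
      fun k => (1 - lam2)⁻¹ • fun j => (if j < k then 1 else lam2) • ℓ j
    have hs : (1 : ℂ) - lam2 ≠ 0 := sub_ne_zero.2 hlam2.symm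
    have hb : convRowDiag M lam1 b = ℓ := by
      funext k
      rw [convRowDiag_apply, map_smul, convRow_smul_tail, (mem_Lsub_iff _ _ _).1 hℓ k, zero_add,
        smul_smul, inv_mul_cancel₀ hs, one_smul]
    refine ⟨b, hb, fun k => ?_⟩
    rw [convRow_convOp, hb]
    convert zero_mem (KLsub M lam1)
    have hcoeff : (lam2 - 1) * (1 - lam2)⁻¹ = -1 := by field_simp; ring
    simp only [b, smul_smul, hcoeff, neg_one_smul, add_neg_cancel]

end Composition

section Quotient

variable {V : Type*} [AddCommGroup V] [Module ℂ V] {r : ℕ}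

theorem convRow_comp_of_intertwines {W : Type*} [AddCommGroup W] [Module ℂ W]
    {M : Fin r → Module.End ℂ V} {M' : Fin r → Module.End ℂ W} (f : V →ₗ[ℂ] W)
    (hf : ∀ j x, M' j (f x) = f (M j x)) (lam : ℂ) (k : Fin r) (v : Fin r → V) :
    convRow M' lam k (f ∘ v) = f (convRow M lam k v) := by
  simp [convRow_apply, hf, apply_ite f]

theorem convOp_comp_of_intertwines {W : Type*} [AddCommGroup W] [Module ℂ W]
    {M : Fin r → Module.End ℂ V} {M' : Fin r → Module.End ℂ W} (f : V →ₗ[ℂ] W)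
    (hf : ∀ j x, M' j (f x) = f (M j x)) (lam : ℂ) (k : Fin r) (v : Fin r → V) :
    convOp M' lam k (f ∘ v) = f ∘ convOp M lam k v := by
  funext i
  rcases eq_or_ne i k with rfl | hi
  · simp [convOp_apply_s4, convRow_comp_of_intertwines f hf]
  · simp [convOp_apply_s4, hi]

theorem mcOp_mk (M : Fin r → Module.End ℂ V) (lam : ℂ)
    (h : ∀ k : Fin r, KLsub M lam ≤ (KLsub M lam).comap (convOp M lam k)) (k : Fin r)
    (v : Fin r → V) :
    mcOp M lam h k (Submodule.Quotient.mk v) = Submodule.Quotient.mk (convOp M lam k v) :=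
  Submodule.mapQ_apply _ _ _ _

variable {M : Fin r → Module.End ℂ V} {lam1 : ℂ}
  (h1 : ∀ k : Fin r, KLsub M lam1 ≤ (KLsub M lam1).comap (convOp M lam1 k))

theorem convRow_mcOp_mkQ_comp (lam2 : ℂ) (k : Fin r) (b : Fin r → Fin r → V) :
    convRow (mcOp M lam1 h1) lam2 k ((KLsub M lam1).mkQ ∘ b) =
      (KLsub M lam1).mkQ (convRow (convOp M lam1) lam2 k b) :=
  convRow_comp_of_intertwines _ (mcOp_mk M lam1 h1) lam2 k b

theorem convOp_mcOp_mkQ_comp (lam2 : ℂ) (k : Fin r) (b : Fin r → Fin r → V) :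
    convOp (mcOp M lam1 h1) lam2 k ((KLsub M lam1).mkQ ∘ b) =
      (KLsub M lam1).mkQ ∘ convOp (convOp M lam1) lam2 k b :=
  convOp_comp_of_intertwines _ (mcOp_mk M lam1 h1) lam2 k b

theorem mkQ_comp_mem_iSup_Ksub_mcOp_iff (hstar : CondStar M) (hlam1 : lam1 ≠ 0)
    (b : Fin r → Fin r → V) :
    (KLsub M lam1).mkQ ∘ b ∈ ⨆ k, Ksub (mcOp M lam1 h1) k ↔
      convRowDiag M lam1 b ∈ ⨆ k, Ksub M k := by
  simp only [mem_iSup_Ksub_iff, Function.comp_apply, mcOp_mk, Submodule.mkQ_apply,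
    Submodule.Quotient.eq, convOp_apply_s4, add_sub_cancel_left, single_mem_KLsub_iff hstar hlam1,
    convRowDiag_apply]

theorem mkQ_comp_mem_Lsub_mcOp_iff (lam2 : ℂ) (b : Fin r → Fin r → V) :
    (KLsub M lam1).mkQ ∘ b ∈ Lsub (mcOp M lam1 h1) lam2 ↔
      ∀ k, convRow (convOp M lam1) lam2 k b ∈ KLsub M lam1 := by
  simp only [mem_Lsub_iff, convRow_mcOp_mkQ_comp, Submodule.mkQ_apply,
    Submodule.Quotient.mk_eq_zero]

theorem mkQ_comp_mem_KLsub_mcOp_iff (hstar : CondStar M) (hss : CondStarStar M)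
    (hlam1 : lam1 ≠ 0) (lam2 : ℂ) (b : Fin r → Fin r → V) :
    (KLsub M lam1).mkQ ∘ b ∈ KLsub (mcOp M lam1 h1) lam2 ↔
      convRowDiag M lam1 b ∈ KLsub M (lam1 * lam2) := by
  set π := (KLsub M lam1).mkQ.compLeft (Fin r)
  have hπ : ∀ c, (KLsub M lam1).mkQ ∘ c = π c := fun _ => rfl
  constructor
  · intro h
    obtain ⟨x, hx, y, hy, hxy⟩ := Submodule.mem_sup.1 h
    obtain ⟨c, rfl⟩ : ∃ c, π c = x := (Submodule.mkQ_surjective _).comp_left x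
    obtain rfl : y = π (b - c) := by rw [map_sub, ← hπ, ← hxy, add_sub_cancel_left]
    rw [← hπ, mkQ_comp_mem_iSup_Ksub_mcOp_iff h1 hstar hlam1] at hx
    rw [← hπ, mkQ_comp_mem_Lsub_mcOp_iff] at hy
    have hL : convRowDiag M lam1 (b - c) ∈ KLsub M (lam1 * lam2) := by
      refine (mem_KLsub_iff_forall_convRow_fixed hstar).2 fun k => ?_
      rw [← convRow_convRow_convOp]
      exact (mem_KLsub_iff_forall_convRow_fixed hstar).1 (hy k) k
    have hsum := add_mem (Submodule.mem_sup_left hx) hL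
    rwa [← map_add, add_sub_cancel] at hsum
  · intro h
    obtain ⟨κ, ℓ, hκ, hℓ, hκℓ⟩ := (mem_KLsub_iff _ _ _).1 h
    obtain ⟨d, hd, hdL⟩ :=
      exists_convRowDiag_eq_of_mem_Lsub hss hlam1 ((mem_Lsub_iff _ _ _).2 hℓ)
    have hK : convRowDiag M lam1 (b - d) ∈ ⨆ k, Ksub M k := by
      rw [map_sub, hd, ← hκℓ, add_sub_cancel_right]
      exact (mem_iSup_Ksub_iff M κ).2 hκ
    rw [← mkQ_comp_mem_iSup_Ksub_mcOp_iff h1 hstar hlam1, hπ] at hK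
    rw [← mkQ_comp_mem_Lsub_mcOp_iff h1, hπ] at hdL
    rw [hπ, ← sub_add_cancel b d, map_add]
    exact add_mem (Submodule.mem_sup_left hK) (Submodule.mem_sup_right hdL)

end Quotient

theorem LinearMap.exists_linearEquiv_comp_eq_of_ker_eq {R A X Y : Type*} [Ring R]
    [AddCommGroup A] [Module R A] [AddCommGroup X] [Module R X] [AddCommGroup Y] [Module R Y]
    {P : A →ₗ[R] X} {Φ : A →ₗ[R] Y} (hP : Function.Surjective P)
    (hΦ : Function.Surjective Φ)
    (h : LinearMap.ker P = LinearMap.ker Φ) : ∃ T : X ≃ₗ[R] Y, ∀ a, T (P a) = Φ a :=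
  ⟨(P.quotKerEquivOfSurjective hP).symm ≪≫ₗ Submodule.quotEquivOfEq _ _ h ≪≫ₗ
    Φ.quotKerEquivOfSurjective hΦ, fun a => by simp⟩

theorem middle_convolution_multiplicative_general
    {V : Type*} [AddCommGroup V] [Module ℂ V]
    {r : ℕ}
    (M : Fin r → Module.End ℂ V)
    (hstar : CondStar M) (hstarstar : CondStarStar M)
    (lam1 lam2 : ℂ) (hlam1 : lam1 ≠ 0)
    (h1 : ∀ k : Fin r, KLsub M lam1 ≤ (KLsub M lam1).comap (convOp M lam1 k))
    (h2 : ∀ k : Fin r, KLsub (mcOp M lam1 h1) lam2 ≤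
      (KLsub (mcOp M lam1 h1) lam2).comap (convOp (mcOp M lam1 h1) lam2 k))
    (h12 : ∀ k : Fin r, KLsub M (lam1 * lam2) ≤
      (KLsub M (lam1 * lam2)).comap (convOp M (lam1 * lam2) k)) :
    ∃ T : ((Fin r → ((Fin r → V) ⧸ KLsub M lam1)) ⧸ KLsub (mcOp M lam1 h1) lam2)
        ≃ₗ[ℂ] ((Fin r → V) ⧸ KLsub M (lam1 * lam2)),
      ∀ k : Fin r, ∀ x,
        T (mcOp (mcOp M lam1 h1) lam2 h2 k x) = mcOp M (lam1 * lam2) h12 k (T x) := by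
  set P := (KLsub (mcOp M lam1 h1) lam2).mkQ ∘ₗ (KLsub M lam1).mkQ.compLeft (Fin r)
  set Φ := (KLsub M (lam1 * lam2)).mkQ ∘ₗ convRowDiag M lam1
  have hP : Function.Surjective P :=
    (Submodule.mkQ_surjective _).comp (Submodule.mkQ_surjective _).comp_left
  have hΦ : Function.Surjective Φ :=
    (Submodule.mkQ_surjective _).comp (convRowDiag_surjective hstarstar hlam1)
  have hker : LinearMap.ker P = LinearMap.ker Φ := by
    ext b
    simp only [P, Φ, LinearMap.mem_ker, LinearMap.comp_apply, Submodule.mkQ_apply,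
      Submodule.Quotient.mk_eq_zero]
    exact mkQ_comp_mem_KLsub_mcOp_iff h1 hstar hstarstar hlam1 lam2 b
  obtain ⟨T, hT⟩ := LinearMap.exists_linearEquiv_comp_eq_of_ker_eq hP hΦ hker
  refine ⟨T, fun k x => ?_⟩
  obtain ⟨b, rfl⟩ := hP x
  calc T (mcOp (mcOp M lam1 h1) lam2 h2 k (P b))
      = T (P (convOp (convOp M lam1) lam2 k b)) := by
        simp only [P, LinearMap.comp_apply, Submodule.mkQ_apply, mcOp_mk]
        exact congrArg (T ∘ Submodule.Quotient.mk) (convOp_mcOp_mkQ_comp h1 lam2 k b)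
    _ = Φ (convOp (convOp M lam1) lam2 k b) := hT _
    _ = mcOp M (lam1 * lam2) h12 k (Φ b) := by simp [Φ, mcOp_mk, convRowDiag_convOp]
    _ = mcOp M (lam1 * lam2) h12 k (T (P b)) := by rw [hT]

/-- `MC_{λ₂}(MC_{λ₁}(M)) ≅ MC_{λ₁λ₂}(M)` as representations of the free
group `F_r`: there is a linear isomorphism intertwining the `k`-th components for all `k`. -/
theorem middle_convolution_multiplicative
    {V : Type*} [AddCommGroup V] [Module ℂ V] [FiniteDimensional ℂ V]
    {r : ℕ} (hr : 1 ≤ r)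
    (M : Fin r → Module.End ℂ V) (hM : ∀ i : Fin r, Function.Bijective (M i))
    (hstar : CondStar M) (hstarstar : CondStarStar M)
    (lam1 lam2 : ℂ) (hlam1 : lam1 ≠ 0) (hlam2 : lam2 ≠ 0)
    (h1 : ∀ k : Fin r, KLsub M lam1 ≤ (KLsub M lam1).comap (convOp M lam1 k))
    (h2 : ∀ k : Fin r, KLsub (mcOp M lam1 h1) lam2 ≤
      (KLsub (mcOp M lam1 h1) lam2).comap (convOp (mcOp M lam1 h1) lam2 k))
    (h12 : ∀ k : Fin r, KLsub M (lam1 * lam2) ≤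
      (KLsub M (lam1 * lam2)).comap (convOp M (lam1 * lam2) k)) :
    ∃ T : ((Fin r → ((Fin r → V) ⧸ KLsub M lam1)) ⧸ KLsub (mcOp M lam1 h1) lam2)
        ≃ₗ[ℂ] ((Fin r → V) ⧸ KLsub M (lam1 * lam2)),
      ∀ k : Fin r, ∀ x,
        T (mcOp (mcOp M lam1 h1) lam2 h2 k x) = mcOp M (lam1 * lam2) h12 k (T x) :=
  middle_convolution_multiplicative_general M hstar hstarstar lam1 lam2 hlam1 h1 h2 h12
end
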